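/- arXiv:2511.19153 — 5 statements merged into one kernel-verified Lean document; each statement's English description precedes it below -/
import Mathlib

section
/- Let G be a finite directed graph with a unique source s and a unique sink t, and let C be a subset of the vertices. A sequence X of vertices of G is C-safe (i.e., for every set P of s-t walks such that each vertex of C lies on some walk of P, some walk of P contains X as a subsequence) if and only if there exists a vertex v in C such that X is a subsequence of the extension ext(v), defined as the sequence of s-dominators of v (in order from s to v) concatenated with the sequence of t-dominators of v (in order from v to t). -/
/-!
Every `s`-`t` walk through `v` meets the `s`-dominators of `v` in order before `v` and the
`t`-dominators after it, so `ext v` is a subsequence of each such walk. Conversely, if `X` is a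
subsequence of every `s`-`t` walk through `v`, gluing arbitrary `s`-`v` and `v`-`t` paths shows
that `X` splits into a prefix lying on every `s`-`v` path and a suffix lying on every `v`-`t`
path; a sequence lying on every `s`-`v` path consists of `s`-dominators of `v`, hence, inside one
such path, is a subsequence of the dominator chain. Finally, by choosing for every `v ∈ C` a
walk through `v` that avoids `X` as a subsequence, safety for `C` reduces to this property for a
single `v ∈ C`.
-/

namespace FD

variable {V : Type*}

/-- A walk: nonempty vertex sequence with consecutive pairs edges. -/
def IsWalk (E : V → V → Prop) (l : List V) : Prop := l ≠ [] ∧ l.Chain' E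

/-- A walk from `s` to `t`. -/
def IsWalkFromTo (E : V → V → Prop) (s t : V) (l : List V) : Prop :=
  IsWalk E l ∧ l.head? = some s ∧ l.getLast? = some t

/-- A path from `s` to `t`: a walk with no repeated vertices. -/
def IsPathFromTo (E : V → V → Prop) (s t : V) (l : List V) : Prop :=
  IsWalkFromTo E s t l ∧ l.Nodup

/-- `s` is the unique source: a vertex has no incoming edge iff it is `s`. -/
def UniqueSource (E : V → V → Prop) (s : V) : Prop := ∀ v, (¬ ∃ u, E u v) ↔ v = s

/-- `t` is the unique sink: a vertex has no outgoing edge iff it is `t`. -/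
def UniqueSink (E : V → V → Prop) (t : V) : Prop := ∀ v, (¬ ∃ w, E v w) ↔ v = t

/-- `u` s-dominates `v`: every `s`-`v` path contains `u`. -/
def SDom (E : V → V → Prop) (s u v : V) : Prop := ∀ p, IsPathFromTo E s v p → u ∈ p

/-- `u` t-dominates `v`: every `v`-`t` path contains `u`. -/
def TDom (E : V → V → Prop) (t u v : V) : Prop := ∀ p, IsPathFromTo E v t p → u ∈ p

/-- `l` is the chain of s-dominators of `v`, listed in dominance order from `s` to `v`. -/
def IsSDomChain (E : V → V → Prop) (s v : V) (l : List V) : Prop :=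
  l.Nodup ∧ (∀ u, u ∈ l ↔ SDom E s u v) ∧
    l.Chain' (fun a b => SDom E s a b) ∧ l.head? = some s ∧ l.getLast? = some v

/-- `l` is the chain of t-dominators of `v`, listed in order from `v` to `t`. -/
def IsTDomChain (E : V → V → Prop) (t v : V) (l : List V) : Prop :=
  l.Nodup ∧ (∀ u, u ∈ l ↔ TDom E t u v) ∧
    l.Chain' (fun a b => TDom E t b a) ∧ l.head? = some v ∧ l.getLast? = some t

/-- `x = ext(v)`: the s-dominator chain of `v` (from `s` to `v`) concatenated with the
t-dominator chain of `v` (from `v` to `t`), with the duplicate `v` removed. -/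
def IsExtension (E : V → V → Prop) (s t v : V) (x : List V) : Prop :=
  ∃ ds dt, IsSDomChain E s v ds ∧ IsTDomChain E t v dt ∧ x = ds ++ dt.tail

/-- `P` is a `C`-walk cover: a set of `s`-`t` walks such that every vertex of `C`
lies on some walk of `P`. -/
def WalkCover (E : V → V → Prop) (s t : V) (C : Set V) (P : Set (List V)) : Prop :=
  (∀ w ∈ P, IsWalkFromTo E s t w) ∧ ∀ c ∈ C, ∃ w ∈ P, c ∈ w

/-- `X` is a `C`-safe sequence: every `C`-walk cover contains a walk having `X`
as a subsequence. -/
def SafeSeq (E : V → V → Prop) (s t : V) (C : Set V) (X : List V) : Prop :=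
  ∀ P, WalkCover E s t C P → ∃ w ∈ P, X.Sublist w

/-- The list of edges traversed by a walk, in order (with multiplicity). -/
def walkEdges (l : List V) : List (V × V) := l.zip l.tail

/-- `idoms` is the immediate s-dominator (parent in the s-dominator tree) function:
`idoms s = s`, and for `v ≠ s`, `idoms v` is a strict s-dominator of `v` that is
s-dominated by every strict s-dominator of `v`. -/
def IsIdomS (E : V → V → Prop) (s : V) (idoms : V → V) : Prop :=
  idoms s = s ∧ ∀ v, v ≠ s → idoms v ≠ v ∧ SDom E s (idoms v) v ∧
    ∀ u, u ≠ v → SDom E s u v → SDom E s u (idoms v)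

/-- Immediate t-dominator (parent in the t-dominator tree) function. -/
def IsIdomT (E : V → V → Prop) (t : V) (idomt : V → V) : Prop :=
  idomt t = t ∧ ∀ v, v ≠ t → idomt v ≠ v ∧ TDom E t (idomt v) v ∧
    ∀ u, u ≠ v → TDom E t u v → TDom E t u (idomt v)

/-- In the tree with parent function `par` rooted at `root`, `c` is the unique child
of `p`. -/
def UniqueChild (par : V → V) (root c p : V) : Prop :=
  c ≠ root ∧ par c = p ∧ ∀ y, y ≠ root → par y = p → y = c

/-- A univocal path `v₁ … v_k`: in the t-dominator tree each `v_{i+1}` has `v_i`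
as its unique child, and `v_k … v_1` is a path in the s-dominator tree where each
vertex but the deepest (`v_k`) has exactly one child. -/
def IsUnivocal (idoms idomt : V → V) (s t : V) (l : List V) : Prop :=
  l ≠ [] ∧ l.Chain' (fun a b => UniqueChild idomt t a b ∧ UniqueChild idoms s b a)

/-- A maximal univocal path: not properly contained in another univocal path. -/
def IsMaximalUnivocal (idoms idomt : V → V) (s t : V) (l : List V) : Prop :=
  IsUnivocal idoms idomt s t l ∧
    ∀ l', IsUnivocal idoms idomt s t l' → l <:+: l' → l' = l

/-- `X` is a maximal safe sequence for walk covers (covering all vertices):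
it is safe and no proper supersequence of it is safe. -/
def MaximalSafe (E : V → V → Prop) (s t : V) (X : List V) : Prop :=
  SafeSeq E s t Set.univ X ∧ ∀ Y, X.Sublist Y → Y ≠ X → ¬ SafeSeq E s t Set.univ Y

/-- Edge `e` reaches edge `e'`: there is a (possibly empty) path from the head of `e`
to the tail of `e'`. -/
def EReach (E : V → V → Prop) (e e' : V × V) : Prop := Relation.ReflTransGen E e.2 e'.1

/-- `P` is a cover of the edge set `C` by `s`-`t` walks. -/
def EdgeWalkCover (E : V → V → Prop) (s t : V) (C : Set (V × V)) (P : Set (List V)) : Prop :=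
  (∀ w ∈ P, IsWalkFromTo E s t w) ∧ ∀ c ∈ C, ∃ w ∈ P, c ∈ walkEdges w

/-- A `C`-safe sequence of edges: every cover of `C` by `s`-`t` walks contains a walk
traversing the edges of `S` in order. -/
def SafeEdgeSeq (E : V → V → Prop) (s t : V) (C : Set (V × V)) (S : List (V × V)) : Prop :=
  ∀ P, EdgeWalkCover E s t C P → ∃ w ∈ P, S.Sublist (walkEdges w)

end FD

namespace List

theorem Nodup.sublist_of_subset {α : Type*} {l₁ l₂ l : List α} (hl : l.Nodup)
    (h₁ : l₁ <+ l) (h₂ : l₂ <+ l) (hsub : l₁ ⊆ l₂) : l₁ <+ l₂ := by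
  classical
  have hfilter : l.filter (· ∈ l₂) = l₂ := by
    have hle : l₂ <+ l.filter (· ∈ l₂) := by
      simpa [filter_eq_self.mpr fun x hx => decide_eq_true hx] using h₂.filter (· ∈ l₂)
    refine (hle.eq_of_length (le_antisymm hle.length_le ?_)).symm
    refine ((hl.filter _).subperm fun x hx => ?_).length_le
    simpa using (mem_filter.mp hx).2
  rw [← hfilter]
  simpa [filter_eq_self.mpr fun x hx => decide_eq_true (hsub hx)] using h₁.filter (· ∈ l₂)

theorem exists_take_drop_sublist_of_forall_sublist_append {α : Type*} {l : List α}
    {A B : List α → Prop} (h : ∀ p q, A p → B q → l <+ p ++ q) :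
    ∃ k, (∀ p, A p → l.take k <+ p) ∧ ∀ q, B q → l.drop k <+ q := by
  classical
  set k := Nat.findGreatest (fun k => ∀ p, A p → l.take k <+ p) l.length
  have hk : ∀ p, A p → l.take k <+ p :=
    Nat.findGreatest_spec (P := fun k => ∀ p, A p → l.take k <+ p) (Nat.zero_le _) (by simp)
  refine ⟨k, hk, fun q hq => ?_⟩
  rcases le_or_gt l.length k with hle | hlt
  · simp [drop_eq_nil_of_le hle]
  obtain ⟨p, hp, hnot⟩ : ∃ p, A p ∧ ¬ l.take (k + 1) <+ p := by
    by_contra! hall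
    exact Nat.findGreatest_is_greatest (Nat.lt_succ_self k) hlt hall
  obtain ⟨l₁, l₂, rfl, h₁, h₂⟩ := sublist_append_iff.mp (h p q hp hq)
  have hlen : l₁.length ≤ k := by
    by_contra! hlt'
    exact hnot ((take_append_of_le_length hlt').symm ▸ (take_sublist _ _).trans h₁)
  rw [drop_append, drop_eq_nil_of_le hlen, nil_append]
  exact (drop_sublist _ _).trans h₂

end List

namespace FD

variable {V : Type*}

open List

section Walks

variable {E : V → V → Prop} {a b c : V} {w : List V}

theorem isWalkFromTo_append_cons {l₁ l₂ : List V} :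
    IsWalkFromTo E a b (l₁ ++ c :: l₂) ↔
      IsWalkFromTo E a c (l₁ ++ [c]) ∧ IsWalkFromTo E c b (c :: l₂) := by
  have hhead : (l₁ ++ c :: l₂).head? = (l₁ ++ [c]).head? := by simp [head?_append]
  unfold IsWalkFromTo IsWalk Chain'
  rw [isChain_split, hhead, getLast?_append_cons]
  simp only [ne_eq, append_eq_nil_iff, reduceCtorEq, and_false, not_false_eq_true,
    getLast?_append_cons, getLast?_singleton, head?_cons, true_and]
  tauto

theorem IsWalkFromTo.mem_right (h : IsWalkFromTo E a b w) : b ∈ w :=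
  mem_of_getLast? h.2.2

theorem IsWalkFromTo.append {w' : List V} (h : IsWalkFromTo E a b w)
    (h' : IsWalkFromTo E b c w') : IsWalkFromTo E a c (w ++ w'.tail) := by
  obtain ⟨l₁, rfl⟩ := getLast?_eq_some_iff.mp h.2.2
  obtain ⟨l₂, rfl⟩ := head?_eq_some_iff.mp h'.2.1
  simpa using isWalkFromTo_append_cons.mpr ⟨h, h'⟩

theorem IsWalkFromTo.cons (hE : E a b) (h : IsWalkFromTo E b c w) :
    IsWalkFromTo E a c (a :: w) := by
  have hab : IsWalkFromTo E a b [a, b] := ⟨⟨by simp, isChain_pair.mpr hE⟩, rfl, rfl⟩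
  obtain ⟨l, rfl⟩ := head?_eq_some_iff.mp h.2.1
  simpa using hab.append h

theorem IsWalkFromTo.reverse (h : IsWalkFromTo E a b w) :
    IsWalkFromTo (flip E) b a w.reverse :=
  ⟨⟨by simpa using h.1.1, isChain_reverse.mpr h.1.2⟩, by simpa using h.2.2, by simpa using h.2.1⟩

theorem isPathFromTo_reverse_iff :
    IsPathFromTo (flip E) b a w.reverse ↔ IsPathFromTo E a b w :=
  ⟨fun h => by
    have hw := h.1.reverse
    rw [reverse_reverse] at hw
    exact ⟨hw, nodup_reverse.mp h.2⟩,
    fun h => ⟨h.1.reverse, nodup_reverse.mpr h.2⟩⟩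

theorem IsWalkFromTo.exists_isPathFromTo (h : IsWalkFromTo E a b w) :
    ∃ p, IsPathFromTo E a b p ∧ p ⊆ w := by
  induction w generalizing a with
  | nil => exact absurd rfl h.1.1
  | cons x w ih =>
    obtain rfl : x = a := by simpa using h.2.1
    rcases w with _ | ⟨y, w⟩
    · obtain rfl : x = b := by simpa using h.2.2
      exact ⟨[x], ⟨h, nodup_singleton x⟩, Subset.refl _⟩
    obtain ⟨hxy, hyw⟩ := isWalkFromTo_append_cons (l₁ := [x]).mp h
    obtain ⟨p, hp, hpw⟩ := ih hyw
    by_cases hxp : x ∈ p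
    · -- shortcut the cycle through `x`
      obtain ⟨l₁, l₂, rfl⟩ := append_of_mem hxp
      refine ⟨x :: l₂, ⟨(isWalkFromTo_append_cons.mp hp.1).2, hp.2.sublist (by simp)⟩, ?_⟩
      exact fun u hu => mem_cons_of_mem _ (hpw (by simp_all))
    · refine ⟨x :: p, ⟨?_, nodup_cons.mpr ⟨hxp, hp.2⟩⟩, cons_subset_cons _ hpw⟩
      exact IsWalkFromTo.cons (isChain_pair.mp hxy.1.2) hp.1

end Walks

section Dominators

variable {E : V → V → Prop} {s t u v : V} {w X D T : List V}

theorem SDom.mem_of_isWalkFromTo (h : SDom E s u v) (hw : IsWalkFromTo E s v w) : u ∈ w :=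
  let ⟨p, hp, hpw⟩ := hw.exists_isPathFromTo
  hpw (h p hp)

theorem sublist_of_isChain_sDom (hc : D.IsChain (SDom E s)) (hnd : D.Nodup)
    (hlast : D.getLast? = some v) (hw : IsWalkFromTo E s v w) : D <+ w := by
  induction D using reverseRecOn generalizing v w with
  | nil => exact nil_sublist w
  | append_singleton D z ih =>
    obtain rfl : z = v := by simpa using hlast
    rcases eq_nil_or_concat D with rfl | ⟨D, y, rfl⟩
    · simpa using hw.mem_right
    obtain ⟨hcD, -, hlink⟩ := isChain_append.mp hc
    have hyz : SDom E s y z := by simpa using hlink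
    have hyz_ne : y ≠ z := by
      rintro rfl
      simp [nodup_append] at hnd
    obtain ⟨w₁, w₂, rfl⟩ := append_of_mem (hyz.mem_of_isWalkFromTo hw)
    obtain ⟨hw₁, hw₂⟩ := isWalkFromTo_append_cons.mp hw
    have hzw₂ : z ∈ w₂ := (mem_cons.mp hw₂.mem_right).resolve_left hyz_ne.symm
    have hD : D ++ [y] <+ w₁ ++ [y] := by
      simpa using ih hcD (nodup_append.mp hnd).1 (by simp) hw₁
    simpa using hD.append (singleton_sublist.mpr hzw₂)

theorem IsSDomChain.sublist_of_isWalkFromTo (hD : IsSDomChain E s v D)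
    (hw : IsWalkFromTo E s v w) : D <+ w :=
  sublist_of_isChain_sDom hD.2.2.1 hD.1 hD.2.2.2.2 hw

theorem IsSDomChain.sublist_of_forall_isPathFromTo (hD : IsSDomChain E s v D)
    (hp : ∃ p, IsPathFromTo E s v p) (hX : ∀ p, IsPathFromTo E s v p → X <+ p) : X <+ D := by
  obtain ⟨p, hp⟩ := hp
  refine hp.2.sublist_of_subset (hX p hp) (hD.sublist_of_isWalkFromTo hp.1) fun x hx => ?_
  exact (hD.2.1 x).mpr fun q hq => (hX q hq).subset hx

theorem tDom_iff_sDom_flip : TDom E t u v ↔ SDom (flip E) t u v := by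
  refine ⟨fun h p hp => ?_, fun h p hp => ?_⟩
  · simpa using h p.reverse (isPathFromTo_reverse_iff.mp (by simpa using hp))
  · simpa using h p.reverse (isPathFromTo_reverse_iff.mpr hp)

theorem IsTDomChain.reverse (hT : IsTDomChain E t v T) : IsSDomChain (flip E) t v T.reverse :=
  ⟨nodup_reverse.mpr hT.1, fun u => by rw [mem_reverse, hT.2.1, tDom_iff_sDom_flip],
    isChain_reverse.mpr (hT.2.2.1.imp fun _ _ => tDom_iff_sDom_flip.mp),
    by simpa using hT.2.2.2.2, by simpa using hT.2.2.2.1⟩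

theorem IsTDomChain.sublist_of_isWalkFromTo (hT : IsTDomChain E t v T)
    (hw : IsWalkFromTo E v t w) : T <+ w :=
  reverse_sublist.mp (hT.reverse.sublist_of_isWalkFromTo hw.reverse)

theorem IsTDomChain.sublist_of_forall_isPathFromTo (hT : IsTDomChain E t v T)
    (hq : ∃ q, IsPathFromTo E v t q) (hX : ∀ q, IsPathFromTo E v t q → X <+ q) : X <+ T := by
  obtain ⟨q, hq⟩ := hq
  refine reverse_sublist.mp (hT.reverse.sublist_of_forall_isPathFromTo
    ⟨q.reverse, isPathFromTo_reverse_iff.mpr hq⟩ fun p hp => ?_)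
  simpa using (hX p.reverse (isPathFromTo_reverse_iff.mp (by simpa using hp))).reverse

end Dominators

section Extension

variable {E : V → V → Prop} {s t v : V} {w x X : List V}

theorem IsExtension.sublist_of_isWalkFromTo (hx : IsExtension E s t v x)
    (hw : IsWalkFromTo E s t w) (hv : v ∈ w) : x <+ w := by
  obtain ⟨D, T, hD, hT, rfl⟩ := hx
  obtain ⟨w₁, w₂, rfl⟩ := append_of_mem hv
  obtain ⟨hw₁, hw₂⟩ := isWalkFromTo_append_cons.mp hw
  obtain ⟨T, rfl⟩ := head?_eq_some_iff.mp hT.2.2.2.1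
  simpa using (hD.sublist_of_isWalkFromTo hw₁).append
    (cons_sublist_cons.mp (hT.sublist_of_isWalkFromTo hw₂))

theorem IsExtension.sublist_of_forall_isWalkFromTo (hx : IsExtension E s t v x)
    (hv : ∃ w, IsWalkFromTo E s t w ∧ v ∈ w)
    (hX : ∀ w, IsWalkFromTo E s t w → v ∈ w → X <+ w) : X <+ x := by
  obtain ⟨D, T, hD, hT, rfl⟩ := hx
  obtain ⟨w, hw, hvw⟩ := hv
  obtain ⟨w₁, w₂, rfl⟩ := append_of_mem hvw
  obtain ⟨hw₁, hw₂⟩ := isWalkFromTo_append_cons.mp hw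
  obtain ⟨p, hp, -⟩ := hw₁.exists_isPathFromTo
  obtain ⟨q, hq, -⟩ := hw₂.exists_isPathFromTo
  obtain ⟨k, htake, hdrop⟩ := exists_take_drop_sublist_of_forall_sublist_append
    (A := IsPathFromTo E s v) (B := fun q => IsPathFromTo E v t (v :: q))
    fun p q hp hq => hX _ (hp.1.append hq.1) (mem_append_left _ hp.1.mem_right)
  have hvdrop : v :: X.drop k <+ T := hT.sublist_of_forall_isPathFromTo ⟨q, hq⟩ fun Q hQ => by
    obtain ⟨Q, rfl⟩ := head?_eq_some_iff.mp hQ.1.2.1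
    exact (hdrop Q hQ).cons_cons v
  obtain ⟨T, rfl⟩ := head?_eq_some_iff.mp hT.2.2.2.1
  rw [← take_append_drop k X]
  exact (hD.sublist_of_forall_isPathFromTo ⟨p, hp⟩ htake).append (cons_sublist_cons.mp hvdrop)

theorem IsExtension.forall_isWalkFromTo_sublist_iff (hx : IsExtension E s t v x)
    (hv : ∃ w, IsWalkFromTo E s t w ∧ v ∈ w) :
    (∀ w, IsWalkFromTo E s t w → v ∈ w → X <+ w) ↔ X <+ x :=
  ⟨hx.sublist_of_forall_isWalkFromTo hv,
    fun h _ hw hvw => h.trans (hx.sublist_of_isWalkFromTo hw hvw)⟩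

end Extension

theorem safeSeq_iff_exists_forall_isWalkFromTo {E : V → V → Prop} {s t : V} {C : Set V}
    {X : List V} :
    SafeSeq E s t C X ↔ ∃ v ∈ C, ∀ w, IsWalkFromTo E s t w → v ∈ w → X <+ w := by
  refine ⟨fun hX => ?_, fun ⟨v, hvC, hv⟩ P hP => ?_⟩
  · by_contra! hbad
    choose f hf using hbad
    obtain ⟨-, ⟨v, rfl⟩, hXw⟩ := hX (Set.range fun v : C => f v v.2)
      ⟨by rintro _ ⟨v, rfl⟩; exact (hf v v.2).1, fun v hv => ⟨_, ⟨⟨v, hv⟩, rfl⟩, (hf v hv).2.1⟩⟩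
    exact (hf v v.2).2.2 hXw
  · obtain ⟨w, hwP, hvw⟩ := hP.2 v hvC
    exact ⟨w, hwP, hv w (hP.1 w hwP) hvw⟩

theorem stmt0_general {V : Type*} (E : V → V → Prop) (s t : V)
    (hall : ∀ a : V, ∃ w, IsWalkFromTo E s t w ∧ a ∈ w)
    (C : Set V) (ext : V → List V) (hext : ∀ a, IsExtension E s t a (ext a))
    (X : List V) :
    SafeSeq E s t C X ↔ ∃ v ∈ C, X.Sublist (ext v) := by
  rw [safeSeq_iff_exists_forall_isWalkFromTo]
  exact exists_congr fun v => and_congr_right fun _ =>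
    (hext v).forall_isWalkFromTo_sublist_iff (hall v)

/-- a sequence `X` is `C`-safe for walk covers iff it is a subsequence of
the extension `ext v` of some vertex `v ∈ C`. -/
theorem stmt0 {V : Type*} [Fintype V] (E : V → V → Prop) (s t : V)
    (hs : UniqueSource E s) (ht : UniqueSink E t)
    (hall : ∀ a : V, ∃ w, IsWalkFromTo E s t w ∧ a ∈ w)
    (C : Set V) (ext : V → List V) (hext : ∀ a, IsExtension E s t a (ext a))
    (X : List V) :
    SafeSeq E s t C X ↔ ∃ v ∈ C, X.Sublist (ext v) :=
  stmt0_general E s t hall C ext hext X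

end FD
end

section
/- Let G be a directed graph with unique source s and sink t. Define a univocal path as a path p = v_1 ... v_k in the t-dominator tree such that v_{i+1} has v_i as its unique child for each i < k, and such that v_k ... v_1 is a path in the s-dominator tree where each vertex except the deepest has exactly one child. Then any two distinct maximal univocal paths of G are vertex-disjoint. -/
/-!
Write `x → y` for one step of a univocal path: `y` is the immediate t-dominator of `x` and `x`
the immediate s-dominator of `y`. So `→` is the graph of a partial function that is injective,
and a univocal path through a vertex `x` is determined by how far it extends on either side of
`x`. Two univocal paths through `x` therefore both lie in the univocal path that extends as far
as the longer of the two on each side, and maximality forces both to equal it.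
-/

namespace List

variable {α : Type*} {R : α → α → Prop}

theorem IsChain.prefix_or_prefix_of_cons (hR : Relator.RightUnique R) {x : α} {l₁ l₂ : List α}
    (h₁ : IsChain R (x :: l₁)) (h₂ : IsChain R (x :: l₂)) : l₁ <+: l₂ ∨ l₂ <+: l₁ := by
  induction l₁ generalizing x l₂ with
  | nil => exact .inl nil_prefix
  | cons a l₁ ih =>
    cases l₂ with
    | nil => exact .inr nil_prefix
    | cons b l₂ =>
      rw [isChain_cons_cons] at h₁ h₂
      obtain rfl := hR h₁.1 h₂.1
      simpa only [prefix_cons_inj] using ih h₁.2 h₂.2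

theorem IsChain.suffix_or_suffix_of_concat (hR : Relator.LeftUnique R) {x : α}
    {l₁ l₂ : List α} (h₁ : IsChain R (l₁ ++ [x])) (h₂ : IsChain R (l₂ ++ [x])) :
    l₁ <:+ l₂ ∨ l₂ <:+ l₁ := by
  have hrev (l : List α) (h : IsChain R (l ++ [x])) :
      IsChain (fun a b ↦ R b a) (x :: l.reverse) := by
    simpa using isChain_reverse.mpr h
  have hR' : Relator.RightUnique fun a b ↦ R b a := fun _ _ _ hb hc ↦ hR hb hc
  simpa only [reverse_prefix] using (hrev _ h₁).prefix_or_prefix_of_cons hR' (hrev _ h₂)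

theorem append_cons_infix_append_cons {a₁ a b₁ b : List α} (x : α) (ha : a₁ <:+ a)
    (hb : b₁ <+: b) : a₁ ++ x :: b₁ <:+: a ++ x :: b := by
  obtain ⟨c, rfl⟩ := ha
  obtain ⟨d, rfl⟩ := hb
  exact ⟨c, d, by simp⟩

theorem IsChain.exists_infix_of_mem (hR : Relator.BiUnique R) {l₁ l₂ : List α} {x : α}
    (h₁ : IsChain R l₁) (h₂ : IsChain R l₂) (hx₁ : x ∈ l₁) (hx₂ : x ∈ l₂) :
    ∃ l, IsChain R l ∧ l₁ <:+: l ∧ l₂ <:+: l := by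
  obtain ⟨a₁, b₁, rfl⟩ := append_of_mem hx₁
  obtain ⟨a₂, b₂, rfl⟩ := append_of_mem hx₂
  rw [isChain_split] at h₁ h₂
  obtain ⟨a, ha₁, ha₂, ha⟩ : ∃ a, a₁ <:+ a ∧ a₂ <:+ a ∧ IsChain R (a ++ [x]) := by
    rcases h₁.1.suffix_or_suffix_of_concat hR.1 h₂.1 with h | h
    exacts [⟨a₂, h, suffix_refl _, h₂.1⟩, ⟨a₁, suffix_refl _, h, h₁.1⟩]
  obtain ⟨b, hb₁, hb₂, hb⟩ : ∃ b, b₁ <+: b ∧ b₂ <+: b ∧ IsChain R (x :: b) := by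
    rcases h₁.2.prefix_or_prefix_of_cons hR.2 h₂.2 with h | h
    exacts [⟨b₂, h, prefix_refl _, h₂.2⟩, ⟨b₁, prefix_refl _, h, h₁.2⟩]
  exact ⟨a ++ x :: b, isChain_split.mpr ⟨ha, hb⟩, append_cons_infix_append_cons x ha₁ hb₁,
    append_cons_infix_append_cons x ha₂ hb₂⟩

end List

namespace FD

variable {V : Type*}

theorem biUnique_univocalStep (idoms idomt : V → V) (s t : V) :
    Relator.BiUnique fun a b ↦ UniqueChild idomt t a b ∧ UniqueChild idoms s b a :=
  ⟨fun _ _ _ h₁ h₂ ↦ h₁.2.2.1.symm.trans h₂.2.2.1, fun _ _ _ h₁ h₂ ↦ h₁.1.2.1.symm.trans h₂.1.2.1⟩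

theorem stmt2_general {V : Type*} (s t : V)
    (idoms idomt : V → V)
    (p₁ p₂ : List V)
    (h₁ : IsMaximalUnivocal idoms idomt s t p₁)
    (h₂ : IsMaximalUnivocal idoms idomt s t p₂)
    (hne : p₁ ≠ p₂) :
    ∀ x, x ∈ p₁ → x ∉ p₂ := by
  intro x hx₁ hx₂
  obtain ⟨u, hu, hp₁u, hp₂u⟩ :=
    h₁.1.2.exists_infix_of_mem (biUnique_univocalStep idoms idomt s t) h₂.1.2 hx₁ hx₂
  have hu_univocal : IsUnivocal idoms idomt s t u := ⟨List.ne_nil_of_mem (hp₁u.subset hx₁), hu⟩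
  exact hne ((h₁.2 u hu_univocal hp₁u).symm.trans (h₂.2 u hu_univocal hp₂u))

/-- two distinct maximal univocal paths are vertex-disjoint. -/
theorem stmt2 {V : Type*} [Fintype V] (E : V → V → Prop) (s t : V)
    (hs : UniqueSource E s) (ht : UniqueSink E t)
    (hall : ∀ a : V, ∃ p, IsPathFromTo E s t p ∧ a ∈ p)
    (idoms idomt : V → V) (hids : IsIdomS E s idoms) (hidt : IsIdomT E t idomt)
    (p₁ p₂ : List V)
    (h₁ : IsMaximalUnivocal idoms idomt s t p₁)
    (h₂ : IsMaximalUnivocal idoms idomt s t p₂)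
    (hne : p₁ ≠ p₂) :
    ∀ x, x ∈ p₁ → x ∉ p₂ :=
  stmt2_general s t idoms idomt p₁ p₂ h₁ h₂ hne

end FD
end

section
/- Let G be a directed graph with unique source s and unique sink t such that every vertex lies on an s-t path. Every vertex u of G appears at most twice in any safe sequence for walk covers: at most once among the s-dominators of any fixed vertex and at most once among its t-dominators. Consequently every safe sequence has length at most 2n, where n is the number of vertices. -/
namespace FD

variable {V : Type*}

/-- every vertex appears at most twice in any safe sequence for walk covers,
and every safe sequence has length at most `2n`. -/
theorem stmt3 {V : Type*} [Fintype V] [DecidableEq V] (E : V → V → Prop) (s t : V)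
    (hs : UniqueSource E s) (ht : UniqueSink E t)
    (hall : ∀ a : V, ∃ p, IsPathFromTo E s t p ∧ a ∈ p)
    (X : List V) (hX : SafeSeq E s t Set.univ X) :
    (∀ u : V, X.count u ≤ 2) ∧ X.length ≤ 2 * Fintype.card V := by
  have hcov : WalkCover E s t Set.univ {p | IsPathFromTo E s t p} := by
    constructor
    · intro w hw; exact hw.1
    · intro c _
      obtain ⟨p, hp, hc⟩ := hall c
      exact ⟨p, hp, hc⟩
  obtain ⟨w, hw, hsub⟩ := hX _ hcov
  have hnd : X.Nodup := hsub.nodup hw.2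
  constructor
  · intro u
    calc X.count u ≤ 1 := List.nodup_iff_count_le_one.mp hnd u
    _ ≤ 2 := one_le_two
  · calc X.length ≤ Fintype.card V := hnd.length_le_card
    _ ≤ 2 * Fintype.card V := by omega

end FD
end

section
/- Let G = (V,E) be a directed graph with edge weights w : E → ℕ, and let G' be constructed as follows: each strongly connected component C of G containing at least one edge is replaced by a single edge c_in → c_out with weight equal to the maximum weight of an edge in C; each trivial SCC (no internal edges) becomes a single vertex (with c_in = c_out); each edge uv of G between distinct SCCs u' and v' is replaced by a length-2 path u'_out → z_uv → v'_in, where z_uv is a fresh vertex, the first edge having weight w(uv) and the second weight 0. Then the maximum weight of an edge antichain (set of pairwise non-reaching edges) in G equals the maximum weight of an edge antichain in G'. -/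
namespace FD

variable {V : Type*}

/-- Two vertices are in the same strongly connected component. -/
def SameSCC (E : V → V → Prop) (u v : V) : Prop :=
  Relation.ReflTransGen E u v ∧ Relation.ReflTransGen E v u

/-- The SCC with representative `c` contains at least one edge. -/
def NontrivSCC (E : V → V → Prop) (rep : V → V) (c : V) : Prop :=
  ∃ a b, E a b ∧ rep a = c ∧ rep b = c

/-- Vertex type of the reduced graph `G'`: `inl (c, false)` is `c_in`, `inl (c, true)`
is `c_out` (trivial SCCs use `inl (c, true)` as their single vertex, so `c_in = c_out`),
and `inr (a, b)` is the fresh vertex `z_{ab}` private to the inter-SCC edge `ab`. -/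
abbrev Vp (V : Type*) := (V × Bool) ⊕ (V × V)

/-- Edges of the reduced graph `G'`. -/
def Ep (E : V → V → Prop) (rep : V → V) : Vp V → Vp V → Prop
  | Sum.inl (c, false), x =>
      x = Sum.inl (c, true) ∧ rep c = c ∧ NontrivSCC E rep c
  | Sum.inl (c, true), Sum.inr (a, b) => E a b ∧ rep a ≠ rep b ∧ c = rep a
  | Sum.inr (a, b), x => E a b ∧ rep a ≠ rep b ∧
      ((NontrivSCC E rep (rep b) ∧ x = Sum.inl (rep b, false)) ∨
       (¬ NontrivSCC E rep (rep b) ∧ x = Sum.inl (rep b, true)))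
  | _, _ => False

/-- Edge weights of the reduced graph `G'`: the edge `c_in → c_out` gets the maximum
weight of an edge inside the SCC `c`; the edge `(rep a)_out → z_{ab}` gets `w a b`;
all other edges (in particular `z_{ab} → (rep b)_in`) get weight `0`. -/
def wp (E : V → V → Prop) [Fintype V] [DecidableEq V] [DecidableRel E]
    (w : V → V → ℕ) (rep : V → V) : Vp V → Vp V → ℕ
  | Sum.inl (c, false), Sum.inl (_, true) =>
      (Finset.univ.filter fun q : V × V => E q.1 q.2 ∧ rep q.1 = c ∧ rep q.2 = c).sup
        fun q => w q.1 q.2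
  | Sum.inl (_, true), Sum.inr (a, b) => w a b
  | _, _ => 0

/-- The set of weights achievable by edge antichains (pairwise non-reaching edge sets). -/
def antiWeights (α : Type*) (R : α → α → Prop) (w : α → α → ℕ) : Set ℕ :=
  {n | ∃ A : Finset (α × α), (∀ e ∈ A, R e.1 e.2) ∧
    (∀ e ∈ A, ∀ e' ∈ A, e ≠ e' → ¬ Relation.ReflTransGen R e.2 e'.1) ∧
    n = ∑ e ∈ A, w e.1 e.2}

-- ===== auxiliary development =====
section Stmt8Aux
open Relation
set_option linter.unusedSectionVars false

variable [Fintype V] [DecidableEq V]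

/-- Edges inside SCC `c`. -/
def sccEdges (E : V → V → Prop) [DecidableRel E] (rep : V → V) (c : V) : Finset (V × V) :=
  Finset.univ.filter fun q : V × V => E q.1 q.2 ∧ rep q.1 = c ∧ rep q.2 = c

/-- A maximum-weight edge in SCC `c`. -/
noncomputable def maxEdge (E : V → V → Prop) [DecidableRel E] (w : V → V → ℕ)
    (rep : V → V) (c : V) : V × V :=
  if h : (sccEdges E rep c).Nonempty then
    (Finset.exists_mem_eq_sup _ h fun q : V × V => w q.1 q.2).choose
  else (c, c)

open Classical in
/-- The entry vertex of the SCC of `b` in `G'`. -/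
noncomputable def inV (E : V → V → Prop) (rep : V → V) (b : V) : Vp V :=
  if NontrivSCC E rep (rep b) then Sum.inl (rep b, false) else Sum.inl (rep b, true)

/-- Projection of `G'` vertices back to `G` (up to SCC). -/
def sig : Vp V → V
  | Sum.inl (c, _) => c
  | Sum.inr (_, b) => b

def phi (rep : V → V) (e : V × V) : Vp V × Vp V :=
  if rep e.1 = rep e.2 then (Sum.inl (rep e.1, false), Sum.inl (rep e.1, true))
  else (Sum.inl (rep e.1, true), Sum.inr (e.1, e.2))

noncomputable def psi (E : V → V → Prop) [DecidableRel E] (w : V → V → ℕ) (rep : V → V) :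
    Vp V × Vp V → V × V
  | (Sum.inl (c, false), _) => maxEdge E w rep c
  | (Sum.inl (_, true), Sum.inr p) => p
  | (Sum.inr p, _) => p
  | (Sum.inl (c, true), Sum.inl _) => (c, c)

variable {E : V → V → Prop} [DecidableRel E] {w : V → V → ℕ} {rep : V → V}

lemma same_reach (hrep : ∀ u v, rep u = rep v ↔ SameSCC E u v) {u v : V}
    (h : rep u = rep v) : ReflTransGen E u v := ((hrep u v).1 h).1

section WithHyp
variable (hidem : ∀ v, rep (rep v) = rep v) (hrep : ∀ u v, rep u = rep v ↔ SameSCC E u v)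
include hidem hrep

lemma to_rep (b : V) : ReflTransGen E b (rep b) := same_reach hrep (hidem b).symm
lemma from_rep (b : V) : ReflTransGen E (rep b) b := same_reach hrep (hidem b)

lemma inV_to_out (b : V) : ReflTransGen (Ep E rep) (inV E rep b) (Sum.inl (rep b, true)) := by
  unfold inV
  split_ifs with h
  · exact ReflTransGen.single ⟨rfl, hidem b, h⟩
  · exact ReflTransGen.refl

lemma lift_reach {u v : V} (h : ReflTransGen E u v) :
    ReflTransGen (Ep E rep) (Sum.inl (rep u, true)) (Sum.inl (rep v, true)) := by
  induction h with
  | refl => exact ReflTransGen.refl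
  | @tail x y _ hxy ih =>
    by_cases hxy2 : rep x = rep y
    · rwa [← hxy2]
    · have h1 : Ep E rep (Sum.inl (rep x, true)) (Sum.inr (x, y)) := ⟨hxy, hxy2, rfl⟩
      have h2 : Ep E rep (Sum.inr (x, y)) (inV E rep y) := by
        unfold inV; split_ifs with h
        · exact ⟨hxy, hxy2, Or.inl ⟨h, rfl⟩⟩
        · exact ⟨hxy, hxy2, Or.inr ⟨h, rfl⟩⟩
      exact ih.trans (((ReflTransGen.single h1).tail h2).trans (inV_to_out hidem hrep y))

lemma proj_step {X Y : Vp V} (h : Ep E rep X Y) :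
    ReflTransGen E (sig X) (sig Y) := by
  rcases X with ⟨c, _ | _⟩ | ⟨a, b⟩
  · exact h.1 ▸ ReflTransGen.refl
  · rcases Y with ⟨d, bb⟩ | ⟨a, b⟩
    · exact absurd h id
    · obtain ⟨h1, h2, rfl⟩ := h
      exact (from_rep hidem hrep a).tail h1
  · rcases h.2.2 with ⟨_, rfl⟩ | ⟨_, rfl⟩ <;> exact to_rep hidem hrep b

lemma proj_reach {X Y : Vp V} (h : ReflTransGen (Ep E rep) X Y) :
    ReflTransGen E (sig X) (sig Y) := by
  induction h with
  | refl => exact ReflTransGen.refl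
  | tail _ hxy ih => exact ih.trans (proj_step hidem hrep hxy)

lemma cross {b c0 : V} (h : ReflTransGen E b c0) :
    rep b ≠ rep c0 → ∃ x y, ReflTransGen E b x ∧ E x y ∧ rep x ≠ rep c0 ∧ rep y = rep c0 := by
  induction h using Relation.ReflTransGen.head_induction_on with
  | refl => exact fun hne => absurd rfl hne
  | @head a c h' _ ih =>
    intro hne
    by_cases hc : rep c = rep c0
    · exact ⟨a, c, ReflTransGen.refl, h', hne, hc⟩
    · obtain ⟨x, y, hx, hxy, h3, h4⟩ := ih hc
      exact ⟨x, y, hx.head h', hxy, h3, h4⟩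

end WithHyp

lemma sccEdges_nonempty {c : V} (h : NontrivSCC E rep c) : (sccEdges E rep c).Nonempty := by
  obtain ⟨a, b, h1, h2, h3⟩ := h
  exact ⟨(a, b), by simp [sccEdges, h1, h2, h3]⟩

lemma maxEdge_spec {c : V} (h : NontrivSCC E rep c) :
    maxEdge E w rep c ∈ sccEdges E rep c ∧
      (sccEdges E rep c).sup (fun q : V × V => w q.1 q.2)
        = w (maxEdge E w rep c).1 (maxEdge E w rep c).2 := by
  rw [maxEdge, dif_pos (sccEdges_nonempty h)]
  exact (Finset.exists_mem_eq_sup _ (sccEdges_nonempty h) fun q : V × V => w q.1 q.2).choose_spec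

lemma mem_sccEdges {c : V} {q : V × V} :
    q ∈ sccEdges E rep c ↔ E q.1 q.2 ∧ rep q.1 = c ∧ rep q.2 = c := by
  simp [sccEdges]

/-- Classification of edges of `G'`. -/
lemma ep_cases {X Y : Vp V} (h : Ep E rep X Y) :
    (∃ c, rep c = c ∧ NontrivSCC E rep c ∧ X = Sum.inl (c, false) ∧ Y = Sum.inl (c, true)) ∨
    (∃ a b, E a b ∧ rep a ≠ rep b ∧ X = Sum.inl (rep a, true) ∧ Y = Sum.inr (a, b)) ∨
    (∃ a b, E a b ∧ rep a ≠ rep b ∧ X = Sum.inr (a, b) ∧ Y = inV E rep b) := by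
  rcases X with ⟨c, _ | _⟩ | ⟨a, b⟩
  · exact Or.inl ⟨c, h.2.1, h.2.2, rfl, h.1⟩
  · rcases Y with ⟨d, bb⟩ | ⟨a, b⟩
    · exact absurd h id
    · obtain ⟨h1, h2, rfl⟩ := h
      exact Or.inr (Or.inl ⟨a, b, h1, h2, rfl, rfl⟩)
  · refine Or.inr (Or.inr ⟨a, b, h.1, h.2.1, rfl, ?_⟩)
    unfold inV
    rcases h.2.2 with ⟨hn, rfl⟩ | ⟨hn, rfl⟩
    · rw [if_pos hn]
    · rw [if_neg hn]


lemma ep_to_inV {a b : V} (hab : E a b) (hne : rep a ≠ rep b) :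
    Ep E rep (Sum.inr (a, b)) (inV E rep b) := by
  unfold inV; split_ifs with h
  · exact ⟨hab, hne, Or.inl ⟨h, rfl⟩⟩
  · exact ⟨hab, hne, Or.inr ⟨h, rfl⟩⟩

section Main
variable (hidem : ∀ v, rep (rep v) = rep v) (hrep : ∀ u v, rep u = rep v ↔ SameSCC E u v)
include hidem hrep

lemma forward {n : ℕ} (hn : n ∈ antiWeights V E w) :
    ∃ m ∈ antiWeights (Vp V) (Ep E rep) (wp E w rep), n ≤ m := by
  obtain ⟨A, hA1, hA2, rfl⟩ := hn
  have hinj : ∀ e ∈ A, ∀ f ∈ A, phi rep e = phi rep f → e = f := by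
    intro e he f hf hef
    by_contra hne
    unfold phi at hef
    split_ifs at hef with h1 h2 h2
    · simp only [Prod.mk.injEq, Sum.inl.injEq, and_true, true_and] at hef
      exact hA2 e he f hf hne (same_reach hrep (h1.symm.trans hef.1))
    · simp at hef
    · simp at hef
    · simp only [Prod.mk.injEq, Sum.inl.injEq, Sum.inr.injEq, and_true, true_and] at hef
      exact hne (Prod.ext hef.2.1 hef.2.2)
  refine ⟨∑ e' ∈ A.image (phi rep), wp E w rep e'.1 e'.2,
    ⟨A.image (phi rep), ?_, ?_, rfl⟩, ?_⟩
  · intro e' he'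
    obtain ⟨e, he, rfl⟩ := Finset.mem_image.1 he'
    unfold phi; split_ifs with h1
    · exact ⟨rfl, hidem e.1, ⟨e.1, e.2, hA1 e he, rfl, h1.symm⟩⟩
    · exact ⟨hA1 e he, h1, rfl⟩
  · intro e' he' f' hf' hne' hreach
    obtain ⟨e, he, rfl⟩ := Finset.mem_image.1 he'
    obtain ⟨f, hf, rfl⟩ := Finset.mem_image.1 hf'
    have hne : e ≠ f := fun h => hne' (by rw [h])
    have hmid : ReflTransGen E (sig (phi rep e).2) (sig (phi rep f).1) :=
      proj_reach hidem hrep hreach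
    have h2 : ReflTransGen E e.2 (sig (phi rep e).2) := by
      unfold phi; split_ifs with h
      · exact same_reach hrep (show rep e.2 = rep (rep e.1) by rw [hidem e.1]; exact h.symm)
      · exact ReflTransGen.refl
    have h3 : ReflTransGen E (sig (phi rep f).1) f.1 := by
      unfold phi; split_ifs with h <;> exact from_rep hidem hrep f.1
    exact hA2 e he f hf hne ((h2.trans hmid).trans h3)
  · rw [Finset.sum_image hinj]
    refine Finset.sum_le_sum fun e he => ?_
    unfold phi; split_ifs with h1
    · exact Finset.le_sup (f := fun q : V × V => w q.1 q.2)
        (mem_sccEdges.2 ⟨hA1 e he, rfl, h1.symm⟩)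
    · exact le_of_eq rfl

lemma backward {n : ℕ} (hn : n ∈ antiWeights (Vp V) (Ep E rep) (wp E w rep)) :
    ∃ m ∈ antiWeights V E w, n ≤ m := by
  obtain ⟨B, hB1, hB2, rfl⟩ := hn
  have hinj : ∀ e' ∈ B, ∀ f' ∈ B, psi E w rep e' = psi E w rep f' → e' = f' := by
    rintro ⟨X, Y⟩ he' ⟨X', Y'⟩ hf' hef
    rcases ep_cases (hB1 _ he') with ⟨c, hc, hcn, rfl, rfl⟩ |
        ⟨a, b, hab, hne, rfl, rfl⟩ | ⟨a, b, hab, hne, rfl, rfl⟩ <;>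
      rcases ep_cases (hB1 _ hf') with ⟨c', hc', hcn', rfl, rfl⟩ |
        ⟨a', b', hab', hne', rfl, rfl⟩ | ⟨a', b', hab', hne', rfl, rfl⟩ <;>
      simp only [psi] at hef
    · have m1 := mem_sccEdges.1 (maxEdge_spec (w := w) hcn).1
      have m2 := mem_sccEdges.1 (maxEdge_spec (w := w) hcn').1
      have : c = c' := m1.2.1.symm.trans (by rw [hef]; exact m2.2.1)
      rw [this]
    · have m1 := mem_sccEdges.1 (maxEdge_spec (w := w) hcn).1
      rw [hef] at m1
      exact absurd (m1.2.1.trans m1.2.2.symm) hne'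
    · have m1 := mem_sccEdges.1 (maxEdge_spec (w := w) hcn).1
      rw [hef] at m1
      exact absurd (m1.2.1.trans m1.2.2.symm) hne'
    · have m2 := mem_sccEdges.1 (maxEdge_spec (w := w) hcn').1
      rw [← hef] at m2
      exact absurd (m2.2.1.trans m2.2.2.symm) hne
    · rw [Prod.mk.injEq] at hef
      obtain ⟨rfl, rfl⟩ := hef
      rfl
    · rw [Prod.mk.injEq] at hef
      obtain ⟨rfl, rfl⟩ := hef
      exact absurd ReflTransGen.refl (hB2 _ he' _ hf' (by simp))
    · have m2 := mem_sccEdges.1 (maxEdge_spec (w := w) hcn').1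
      rw [← hef] at m2
      exact absurd (m2.2.1.trans m2.2.2.symm) hne
    · rw [Prod.mk.injEq] at hef
      obtain ⟨rfl, rfl⟩ := hef
      exact absurd ReflTransGen.refl (hB2 _ hf' _ he' (by simp))
    · rw [Prod.mk.injEq] at hef
      obtain ⟨rfl, rfl⟩ := hef
      rfl
  refine ⟨∑ e ∈ B.image (psi E w rep), w e.1 e.2, ⟨B.image (psi E w rep), ?_, ?_, rfl⟩, ?_⟩
  · intro e he
    obtain ⟨⟨X, Y⟩, he', rfl⟩ := Finset.mem_image.1 he
    rcases ep_cases (hB1 _ he') with ⟨c, hc, hcn, rfl, rfl⟩ |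
        ⟨a, b, hab, hne, rfl, rfl⟩ | ⟨a, b, hab, hne, rfl, rfl⟩
    · exact (mem_sccEdges.1 (maxEdge_spec (w := w) hcn).1).1
    · exact hab
    · exact hab
  · intro e he f hf hne0 hreach
    obtain ⟨⟨X, Y⟩, he', rfl⟩ := Finset.mem_image.1 he
    obtain ⟨⟨X', Y'⟩, hf', rfl⟩ := Finset.mem_image.1 hf
    have hne' : (X, Y) ≠ (X', Y') := fun h => hne0 (by rw [h])
    -- the "S" step: from Y we can reach the out-vertex of the SCC of (psi (X,Y)).2
    have hS : ReflTransGen (Ep E rep) Y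
        (Sum.inl (rep (psi E w rep (X, Y)).2, true)) := by
      rcases ep_cases (hB1 _ he') with ⟨c, hc, hcn, rfl, rfl⟩ |
          ⟨a, b, hab, hne, rfl, rfl⟩ | ⟨a, b, hab, hne, rfl, rfl⟩
      · simp only [psi]
        rw [(mem_sccEdges.1 (maxEdge_spec (w := w) hcn).1).2.2]
      · exact (ReflTransGen.single (ep_to_inV hab hne)).trans (inV_to_out hidem hrep b)
      · exact inV_to_out hidem hrep b
    rcases ep_cases (hB1 _ hf') with ⟨c', hc', hcn', rfl, rfl⟩ |
        ⟨a', b', hab', hne2, rfl, rfl⟩ | ⟨a', b', hab', hne2, rfl, rfl⟩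
    · -- target is a c-in vertex
      set b0 := (psi E w rep (X, Y)).2 with hb0
      have hc0 : rep (psi E w rep (Sum.inl (c', false), Sum.inl (c', true))).1 = c' :=
        (mem_sccEdges.1 (maxEdge_spec (w := w) hcn').1).2.1
      by_cases hb : rep b0 = c'
      · rcases ep_cases (hB1 _ he') with ⟨c, hc, hcn, rfl, rfl⟩ |
            ⟨a, b, hab, hne, rfl, rfl⟩ | ⟨a, b, hab, hne, rfl, rfl⟩
        · have : c = c' := by
            rw [← hb, hb0]
            exact ((mem_sccEdges.1 (maxEdge_spec (w := w) hcn).1).2.2).symm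
          exact hne' (by rw [this])
        · have hb' : rep b = c' := hb
          have step : Ep E rep (Sum.inr (a, b)) (Sum.inl (c', false)) :=
            ⟨hab, hne, Or.inl ⟨by rw [hb']; exact hcn', by rw [hb']⟩⟩
          exact hB2 _ he' _ hf' hne' (ReflTransGen.single step)
        · have hb' : rep b = c' := hb
          have : inV E rep b = Sum.inl (c', false) := by
            unfold inV
            rw [if_pos (by rw [hb']; exact hcn')]
            rw [hb']
          exact hB2 _ he' _ hf' hne' (this ▸ ReflTransGen.refl)
      · obtain ⟨x, y, hx, hxy, hxne, hy⟩ := cross hidem hrep hreach (by rwa [hc0])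
        rw [hc0] at hy
        have step1 : Ep E rep (Sum.inl (rep x, true)) (Sum.inr (x, y)) :=
          ⟨hxy, fun h => hxne (by rw [h, hy, hc0]), rfl⟩
        have step2 : Ep E rep (Sum.inr (x, y)) (Sum.inl (c', false)) :=
          ⟨hxy, fun h => hxne (by rw [h, hy, hc0]), Or.inl ⟨by rw [hy]; exact hcn', by rw [hy]⟩⟩
        exact hB2 _ he' _ hf' hne'
          (((hS.trans (lift_reach hidem hrep hx)).tail step1).tail step2)
    · -- target is an out vertex
      exact hB2 _ he' _ hf' hne' (hS.trans (lift_reach hidem hrep hreach))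
    · -- target is a z vertex
      exact hB2 _ he' _ hf' hne'
        ((hS.trans (lift_reach hidem hrep hreach)).tail ⟨hab', hne2, rfl⟩)
  · rw [Finset.sum_image hinj]
    refine Finset.sum_le_sum ?_
    rintro ⟨X, Y⟩ he'
    rcases ep_cases (hB1 _ he') with ⟨c, hc, hcn, rfl, rfl⟩ |
        ⟨a, b, hab, hne, rfl, rfl⟩ | ⟨a, b, hab, hne, rfl, rfl⟩
    · exact le_of_eq (maxEdge_spec (w := w) hcn).2
    · exact le_of_eq rfl
    · have h0 : wp E w rep (Sum.inr (a, b)) (inV E rep b) = 0 := by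
        unfold inV; split_ifs <;> rfl
      rw [h0]
      exact Nat.zero_le _
end Main
end Stmt8Aux

/-- the maximum weight of an edge antichain in `G` equals the maximum
weight of an edge antichain in the condensation-based reduced graph `G'`. -/
theorem stmt8 {V : Type*} [Fintype V] [DecidableEq V] (E : V → V → Prop) [DecidableRel E]
    (w : V → V → ℕ) (rep : V → V)
    (hidem : ∀ v, rep (rep v) = rep v)
    (hrep : ∀ u v, rep u = rep v ↔ SameSCC E u v) :
    sSup (antiWeights V E w) = sSup (antiWeights (Vp V) (Ep E rep) (wp E w rep)) := by
  have h0G : (0 : ℕ) ∈ antiWeights V E w := ⟨∅, by simp, by simp, by simp⟩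
  have h0G' : (0 : ℕ) ∈ antiWeights (Vp V) (Ep E rep) (wp E w rep) :=
    ⟨∅, by simp, by simp, by simp⟩
  have hbdd : ∀ (α : Type _) [Fintype α] (R : α → α → Prop) (w' : α → α → ℕ),
      BddAbove (antiWeights α R w') := by
    intro α _ R w'
    refine ⟨∑ e : α × α, w' e.1 e.2, fun n hn => ?_⟩
    obtain ⟨A, -, -, rfl⟩ := hn
    exact Finset.sum_le_sum_of_subset (Finset.subset_univ A)
  apply le_antisymm
  · refine csSup_le ⟨0, h0G⟩ fun n hn => ?_
    obtain ⟨m, hm, hnm⟩ := forward hidem hrep hn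
    exact hnm.trans (le_csSup (hbdd _ _ _) hm)
  · refine csSup_le ⟨0, h0G'⟩ fun n hn => ?_
    obtain ⟨m, hm, hnm⟩ := backward hidem hrep hn
    exact hnm.trans (le_csSup (hbdd _ _ _) hm)

end FD
end

section
/- Let G be a directed graph with unique source s and unique sink t, every vertex on some s-t path, and let p = u_1 ... u_k be a maximal univocal path (the extensions of all its vertices coincide). Then for every vertex v not on p, the extension ext(v) either contains all vertices of p (as a contiguous subsequence in the univocal order) or contains no vertex of p. -/
/-!
Along the s-dominator tree, a vertex of `p` other than `u_k` has its successor on `p` as its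
only child, and a vertex of `p` other than `u_1` has its predecessor on `p` as its parent. The
s-dominator chain of `v` is the tree path from `s` down to `v`; once it enters `p` it cannot
leave before `u_k`, and it must enter at `u_1`, so it contains `p` as a contiguous block. The
t-dominator chain is handled symmetrically, and reversing every edge turns s-dominators into
t-dominators, so one argument serves for both halves of `ext(v)`.
-/

namespace FD

variable {V : Type*}

section Tree

variable {par : V → V} {root : V}

theorem prefix_of_isChain_parent {p l : List V}
    (hp : p.IsChain fun a b => a ≠ root ∧ par a = b)
    (hl : l.IsChain fun a b => a ≠ root ∧ par a = b)
    (hroot : l.getLast? = some root) (hhead : p.head? = l.head?) : p <+: l := by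
  induction p generalizing l with
  | nil => exact List.nil_prefix
  | cons w q ih =>
    obtain ⟨l, rfl⟩ : ∃ l', l = w :: l' := by
      cases l with
      | nil => simp at hhead
      | cons y l => exact ⟨l, by simp_all⟩
    rcases q with _ | ⟨w', q⟩
    · simp
    obtain ⟨⟨hw, rfl⟩, hq⟩ := List.isChain_cons_cons.1 hp
    rcases l with _ | ⟨y, l⟩
    · simp_all
    obtain ⟨⟨-, rfl⟩, hl⟩ := List.isChain_cons_cons.1 hl
    exact List.cons_prefix_cons.2 ⟨rfl, ih hq hl (by simpa using hroot) rfl⟩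

theorem head?_eq_parent_of_uniqueChild {p : List V}
    (hp : p.IsChain fun a b => UniqueChild par root a b) {v : V} (hv : v ∉ p)
    (hvroot : v ≠ root) (hpar : par v ∈ p) : p.head? = some (par v) := by
  obtain ⟨q, r, rfl⟩ := List.append_of_mem hpar
  rcases q.eq_nil_or_concat' with rfl | ⟨q, z, rfl⟩
  · rfl
  · have hz : UniqueChild par root z (par v) :=
      List.isChain_pair.1 (hp.infix ⟨q, r, by simp⟩)
    exact absurd (by simp [hz.2.2 v hvroot rfl]) hv

theorem infix_of_isChain_parent {p l : List V} {v : V}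
    (hl : (v :: l).IsChain fun a b => a ≠ root ∧ par a = b)
    (hroot : (v :: l).getLast? = some root)
    (hp : p.IsChain fun a b => UniqueChild par root a b)
    (hv : v ∉ p) (hmeet : ∃ a ∈ p, a ∈ v :: l) : p <:+: l := by
  induction l generalizing v with
  | nil =>
    obtain ⟨a, hap, hav⟩ := hmeet
    exact absurd (List.mem_singleton.1 hav ▸ hap) hv
  | cons w l ih =>
    obtain ⟨⟨hvroot, rfl⟩, hl⟩ := List.isChain_cons_cons.1 hl
    rw [List.getLast?_cons_cons] at hroot
    by_cases hw : par v ∈ p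
    · refine (prefix_of_isChain_parent (hp.imp fun _ _ h => ⟨h.1, h.2.1⟩) hl hroot ?_).isInfix
      simpa using head?_eq_parent_of_uniqueChild hp hv hvroot hw
    · obtain ⟨a, hap, hav⟩ := hmeet
      have hav : a ∈ par v :: l :=
        (List.mem_cons.1 hav).resolve_left (by rintro rfl; exact hv hap)
      exact List.infix_cons (ih hl hroot hw ⟨a, hap, hav⟩)

end Tree

section Dominators

variable {E : V → V → Prop}

theorem IsPathFromTo.reverse {u w : V} {l : List V} (h : IsPathFromTo E u w l) :
    IsPathFromTo (flip E) w u l.reverse := by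
  obtain ⟨⟨⟨hne, hch⟩, hhead, hlast⟩, hnd⟩ := h
  exact ⟨⟨⟨by simpa using hne, List.isChain_reverse.2 hch⟩, by simpa, by simpa⟩,
    List.nodup_reverse.2 hnd⟩

theorem isPathFromTo_flip_iff {u w : V} {l : List V} :
    IsPathFromTo (flip E) w u l ↔ IsPathFromTo E u w l.reverse :=
  ⟨fun h => h.reverse, fun h => by simpa using h.reverse⟩

theorem IsPathFromTo.suffix {u w a : V} {l₁ l₂ : List V}
    (h : IsPathFromTo E u w (l₁ ++ a :: l₂)) : IsPathFromTo E a w (a :: l₂) := by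
  obtain ⟨⟨⟨-, hch⟩, -, hlast⟩, hnd⟩ := h
  refine ⟨⟨⟨List.cons_ne_nil _ _, hch.suffix ⟨l₁, rfl⟩⟩, rfl, ?_⟩,
    hnd.sublist (List.sublist_append_right _ _)⟩
  rwa [List.getLast?_append_of_ne_nil _ (List.cons_ne_nil _ _)] at hlast

theorem exists_path_to_sink {s t : V} (hall : ∀ a : V, ∃ q, IsPathFromTo E s t q ∧ a ∈ q)
    (u : V) : ∃ q, IsPathFromTo E u t q := by
  obtain ⟨q, hq, hu⟩ := hall u
  obtain ⟨l₁, l₂, rfl⟩ := List.append_of_mem hu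
  exact ⟨_, hq.suffix⟩

theorem exists_path_from_source {s t : V}
    (hall : ∀ a : V, ∃ q, IsPathFromTo E s t q ∧ a ∈ q)
    (u : V) : ∃ q, IsPathFromTo E s u q := by
  have hall' (a : V) : ∃ q, IsPathFromTo (flip E) t s q ∧ a ∈ q := by
    obtain ⟨q, hq, ha⟩ := hall a
    exact ⟨q.reverse, hq.reverse, List.mem_reverse.2 ha⟩
  obtain ⟨q, hq⟩ := exists_path_to_sink hall' u
  exact ⟨q.reverse, hq.reverse⟩

theorem sDom_iff_tDom_flip {s u v : V} : SDom E s u v ↔ TDom (flip E) s u v :=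
  ⟨fun h q hq => by simpa using h _ (isPathFromTo_flip_iff.1 hq),
    fun h q hq => by simpa using h _ hq.reverse⟩

variable {t : V}

theorem tDom_refl (v : V) : TDom E t v v := fun q hq => by
  obtain ⟨⟨-, hhead, -⟩, -⟩ := hq
  exact List.mem_of_mem_head? hhead

theorem tDom_trans {a b c : V} (hab : TDom E t a b) (hbc : TDom E t b c) : TDom E t a c := by
  intro q hq
  obtain ⟨l₁, l₂, rfl⟩ := List.append_of_mem (hbc q hq)
  exact List.mem_append_right _ (hab _ hq.suffix)

theorem tDom_antisymm (hreach : ∀ u, ∃ q, IsPathFromTo E u t q) {u w : V}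
    (huw : TDom E t u w) (hwu : TDom E t w u) : u = w := by
  obtain ⟨q, hq⟩ := hreach u
  obtain ⟨l₁, l₂, rfl⟩ := List.append_of_mem (hwu q hq)
  rcases l₁ with _ | ⟨a, l₁⟩
  · simpa using hq.1.2.1.symm
  · obtain rfl : a = u := by simpa using hq.1.2.1
    have hnd := List.nodup_cons.1 hq.2
    exact absurd (List.mem_append_right _ (huw _ hq.suffix)) hnd.1

theorem eq_of_tDom_sink {u : V} (h : TDom E t u t) : u = t := by
  have hpath : IsPathFromTo E t t [t] :=
    ⟨⟨⟨List.cons_ne_nil _ _, List.isChain_singleton _⟩, rfl, rfl⟩, List.nodup_singleton _⟩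
  simpa using h _ hpath

theorem IsTDomChain.eq_singleton_sink {l : List V} (hl : IsTDomChain E t t l) : l = [t] := by
  obtain ⟨hnd, hmem, -, hhead, -⟩ := hl
  rcases l with _ | ⟨a, _ | ⟨b, l⟩⟩
  · simp at hhead
  · simpa using hhead
  · obtain rfl : a = t := by simpa using hhead
    obtain rfl : b = a := eq_of_tDom_sink ((hmem b).1 (by simp))
    simp at hnd

theorem IsTDomChain.tail {idomt : V → V} (hidt : IsIdomT E t idomt)
    (hreach : ∀ u, ∃ q, IsPathFromTo E u t q) {v : V} {l : List V}
    (hl : IsTDomChain E t v l) (hv : v ≠ t) : IsTDomChain E t (idomt v) l.tail := by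
  obtain ⟨hnd, hmem, hch, hhead, hlast⟩ := hl
  obtain ⟨hidne, hidom, hidmax⟩ := hidt.2 v hv
  obtain ⟨l, rfl⟩ : ∃ l', l = v :: l' := by
    rcases l with _ | ⟨a, l⟩
    · simp at hhead
    · exact ⟨l, by simp_all⟩
  obtain ⟨hvl, hnd⟩ := List.nodup_cons.1 hnd
  have hmem' (u : V) : u ∈ l ↔ TDom E t u (idomt v) := by
    refine ⟨fun hu => hidmax u (by rintro rfl; exact hvl hu) ((hmem u).1 (by simp [hu])),
      fun hu => ?_⟩
    have huv : u ≠ v := by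
      rintro rfl
      exact hidne (tDom_antisymm hreach hidom hu)
    simpa [huv] using (hmem u).2 (tDom_trans hu hidom)
  let R := fun a b => TDom E t b a
  have : Trans R R R := ⟨fun hab hbc => tDom_trans hbc hab⟩
  have hpw := List.isChain_iff_pairwise.1 (List.isChain_cons.1 hch).2
  rcases l with _ | ⟨g, l⟩
  · simp_all
  refine ⟨hnd, hmem', List.isChain_iff_pairwise.2 hpw, ?_, by simpa using hlast⟩
  rcases List.mem_cons.1 ((hmem' _).2 (tDom_refl _)) with h | h
  · simp [h]
  · simp [tDom_antisymm hreach ((hmem' g).1 (by simp)) ((List.pairwise_cons.1 hpw).1 _ h)]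

theorem IsTDomChain.isChain_idom {idomt : V → V} (hidt : IsIdomT E t idomt)
    (hreach : ∀ u, ∃ q, IsPathFromTo E u t q) {v : V} {l : List V}
    (hl : IsTDomChain E t v l) : l.IsChain fun a b => a ≠ t ∧ idomt a = b := by
  induction l generalizing v with
  | nil => exact .nil
  | cons a l ih =>
    obtain rfl : a = v := by simpa using hl.2.2.2.1
    by_cases hv : a = t
    · subst hv
      rw [hl.eq_singleton_sink]
      exact List.isChain_singleton _
    · have htail := hl.tail hidt hreach hv
      exact List.isChain_cons.2
        ⟨fun b hb => ⟨hv, Option.mem_unique (htail.2.2.2.1 : idomt a ∈ l.head?) hb⟩,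
          ih htail⟩

theorem IsTDomChain.infix_tail {idomt : V → V} (hidt : IsIdomT E t idomt)
    (hreach : ∀ u, ∃ q, IsPathFromTo E u t q) {p l : List V}
    (hp : p.IsChain fun a b => UniqueChild idomt t a b) {v : V} (hl : IsTDomChain E t v l)
    (hv : v ∉ p) (hmeet : ∃ a ∈ p, a ∈ l) : p <:+: l.tail := by
  obtain ⟨l, rfl⟩ : ∃ l', l = v :: l' := by
    rcases l with _ | ⟨a, l⟩
    · simp at hmeet
    · exact ⟨l, by simpa using hl.2.2.2.1⟩
  exact infix_of_isChain_parent (hl.isChain_idom hidt hreach) hl.2.2.2.2 hp hv hmeet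

variable {s : V}

theorem IsSDomChain.reverse {v : V} {l : List V} (hl : IsSDomChain E s v l) :
    IsTDomChain (flip E) s v l.reverse := by
  obtain ⟨hnd, hmem, hch, hhead, hlast⟩ := hl
  refine ⟨List.nodup_reverse.2 hnd, fun u => ?_, List.isChain_reverse.2 ?_, by simpa, by simpa⟩
  · simpa [← sDom_iff_tDom_flip] using hmem u
  · exact hch.imp fun _ _ => sDom_iff_tDom_flip.1

theorem IsIdomS.flip {idoms : V → V} (hids : IsIdomS E s idoms) : IsIdomT (flip E) s idoms := by
  simpa only [IsIdomS, IsIdomT, sDom_iff_tDom_flip] using hids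

theorem IsSDomChain.infix {idoms : V → V} (hids : IsIdomS E s idoms)
    (hreach : ∀ u, ∃ q, IsPathFromTo E s u q) {p l : List V}
    (hp : p.IsChain fun a b => UniqueChild idoms s b a) {v : V} (hl : IsSDomChain E s v l)
    (hv : v ∉ p) (hmeet : ∃ a ∈ p, a ∈ l) : p <:+: l := by
  have hreach' (u : V) : ∃ q, IsPathFromTo (flip E) u s q := by
    obtain ⟨q, hq⟩ := hreach u
    exact ⟨q.reverse, hq.reverse⟩
  have := hl.reverse.infix_tail hids.flip hreach' (List.isChain_reverse.2 hp)
    (by simpa using hv) (by simpa using hmeet)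
  exact List.reverse_infix.1 (this.trans (List.tail_suffix _).isInfix)

end Dominators

theorem stmt17_general {V : Type*} (E : V → V → Prop) (s t : V)
    (hall : ∀ a : V, ∃ p, IsPathFromTo E s t p ∧ a ∈ p)
    (idoms idomt : V → V) (hids : IsIdomS E s idoms) (hidt : IsIdomT E t idomt)
    (p : List V) (hp : IsMaximalUnivocal idoms idomt s t p)
    (v : V) (hv : v ∉ p) (x : List V) (hx : IsExtension E s t v x) :
    p <:+: x ∨ ∀ a ∈ p, a ∉ x := by
  obtain ⟨ds, dt, hds, hdt, rfl⟩ := hx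
  refine or_iff_not_imp_right.2 fun hmeet => ?_
  push Not at hmeet
  obtain ⟨a, hap, had⟩ := hmeet
  have hchain := hp.1.2
  rcases List.mem_append.1 had with hads | hadt
  · have := hds.infix hids (exists_path_from_source hall)
      (hchain.imp fun _ _ h => h.2) hv ⟨a, hap, hads⟩
    exact this.trans (List.prefix_append _ _).isInfix
  · have := hdt.infix_tail hidt (exists_path_to_sink hall)
      (hchain.imp fun _ _ h => h.1) hv ⟨a, hap, List.mem_of_mem_tail hadt⟩
    exact this.trans (List.suffix_append _ _).isInfix

/-- for a maximal univocal path `p` and a vertex `v` not on `p`, the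
extension `ext v` either contains all of `p` (contiguously, in univocal order) or
contains no vertex of `p`. -/
theorem stmt17 {V : Type*} [Fintype V] (E : V → V → Prop) (s t : V)
    (hs : UniqueSource E s) (ht : UniqueSink E t)
    (hall : ∀ a : V, ∃ p, IsPathFromTo E s t p ∧ a ∈ p)
    (idoms idomt : V → V) (hids : IsIdomS E s idoms) (hidt : IsIdomT E t idomt)
    (p : List V) (hp : IsMaximalUnivocal idoms idomt s t p)
    (v : V) (hv : v ∉ p) (x : List V) (hx : IsExtension E s t v x) :
    p <:+: x ∨ ∀ a ∈ p, a ∉ x :=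
  stmt17_general E s t hall idoms idomt hids hidt p hp v hv x hx

end FD
end
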